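/- arXiv:1301.0782 — 2 statements merged into one kernel-verified Lean document; each statement's English description precedes it below -/
import Mathlib

section
/- (Recipe theorem) Let Q be a function assigning to each matroid M a polynomial Q_M(x,y,a,b) such that: Q is multiplicative over direct sums with Q of the empty matroid equal to 1; if e is a coloop of M then Q_M = x·Q_{M\e}; if e is a loop of M then Q_M = y·Q_{M/e}; and if e is neither a loop nor a coloop then Q_M = a·Q_{M\e} + b·Q_{M/e}. Then for every matroid M, Q_M(x,y,a,b) = a^{n(M)} b^{r(M)} T_M(x/b, y/a), where r(M) is the rank, n(M) = |E| − r(M) is the nullity, and T_M is the Tutte polynomial (here a, b are invertible elements of the coefficient field). -/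
/-!
The right-hand side `a ^ n(M) * b ^ r(M) * T_M(x / b, y / a)` obeys the same coloop, loop and
deletion–contraction rules as `Q`, because the Tutte polynomial satisfies
`T_M = x T_{M＼e}` for a coloop, `T_M = y T_{M／e}` for a loop and `T_M = T_{M＼e} + T_{M／e}`
otherwise; the powers of `a` and `b` absorb the shift of rank and nullity. These rules determine
an invariant of finite matroids, by induction on the size of the ground set.

The Tutte recursions come from splitting the subset expansion of `T_M` according to whether `A`
contains `e`: the subsets avoiding `e` give the expansion of `T_{M＼e}`, and `A ↦ A ∪ {e}` matches
the remaining ones with the expansion of `T_{M／e}`, up to a factor `x - 1` or `y - 1` when `e` is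
a coloop or a loop.
-/

open Matroid Set Finset

variable {α : Type*}

/-- Deletion `M \ D`: restriction of `M` to `M.E \ D`. -/
def mDelete (M : Matroid α) (D : Set α) : Matroid α := M ↾ (M.E \ D)

/-- Contraction `M / C := (M* \ C)*`. -/
def mContract (M : Matroid α) (C : Set α) : Matroid α := (mDelete M✶ C)✶

/-- Rank of a subset: maximal cardinality of an independent subset. -/
noncomputable def mRk (M : Matroid α) (A : Set α) : ℕ :=
  sSup {n : ℕ | ∃ I, M.Indep I ∧ I ⊆ A ∧ I.ncard = n}

/-- Rank of a matroid. -/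
noncomputable def mRank (M : Matroid α) : ℕ := mRk M M.E

/-- Nullity of a matroid. -/
noncomputable def mNullity (M : Matroid α) : ℕ := M.E.ncard - mRank M

/-- `e` is a loop: `{e}` is a circuit, i.e. `e` is in the ground set and `{e}` is dependent. -/
def mIsLoop (M : Matroid α) (e : α) : Prop := e ∈ M.E ∧ ¬ M.Indep {e}

/-- `e` is a coloop: `e` lies in every basis. -/
def mIsColoop (M : Matroid α) (e : α) : Prop := ∀ B, M.IsBase B → e ∈ B

/-- The Tutte polynomial `T_M(x,y) = Σ_{A ⊆ E} (x-1)^(r(E)-r(A)) (y-1)^(|A|-r(A))`. -/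
noncomputable def mTutte {R : Type*} [CommRing R] (M : Matroid α) (x y : R) : R :=
  letI := Classical.propDecidable M.E.Finite
  if hE : M.E.Finite then
    ∑ A ∈ hE.toFinset.powerset,
      (x - 1) ^ (mRk M M.E - mRk M (A : Set α)) * (y - 1) ^ (A.card - mRk M (A : Set α))
  else 0

namespace Matroid

variable {M : Matroid α} {A B D I : Set α} {e : α}

lemma mIsLoop_iff : mIsLoop M e ↔ M.IsLoop e := by
  rw [mIsLoop, ← singleton_dep, dep_iff, Set.singleton_subset_iff, and_comm]

lemma mIsColoop_iff : mIsColoop M e ↔ M.IsColoop e :=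
  isColoop_iff_forall_mem_isBase.symm

section Rank

variable [M.RankFinite]

lemma IsBasis'.mRk_eq_ncard (hI : M.IsBasis' I A) : mRk M A = I.ncard := by
  refine IsGreatest.csSup_eq ⟨⟨I, hI.indep, hI.subset, rfl⟩, ?_⟩
  rintro _ ⟨J, hJ, hJA, rfl⟩
  have : J.encard ≤ I.encard := hI.encard_eq_eRk ▸ hJ.encard_le_eRk_of_subset hJA
  rwa [← hJ.finite.cast_ncard_eq, ← hI.indep.finite.cast_ncard_eq, Nat.cast_le] at this

lemma cast_mRk (A : Set α) : (mRk M A : ℕ∞) = M.eRk A := by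
  obtain ⟨I, hI⟩ := M.exists_isBasis' A
  rw [hI.mRk_eq_ncard, hI.indep.finite.cast_ncard_eq, hI.encard_eq_eRk]

lemma mRk_mono (hAB : A ⊆ B) : mRk M A ≤ mRk M B := by
  exact_mod_cast (cast_mRk A).trans_le ((M.eRk_mono hAB).trans_eq (cast_mRk B).symm)

lemma mRk_le_ncard (hA : A.Finite) : mRk M A ≤ A.ncard := by
  have := M.eRk_le_encard A
  rwa [← cast_mRk, ← hA.cast_ncard_eq, Nat.cast_le] at this

lemma mRk_delete (hA : A ⊆ M.E \ D) : mRk (M ＼ D) A = mRk M A := by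
  have : (M ＼ D).eRk A = M.eRk A := restrict_eRk_eq M hA
  rwa [← cast_mRk, ← cast_mRk, Nat.cast_inj] at this

lemma IsLoop.mRk_insert (he : M.IsLoop e) (A : Set α) : mRk M (insert e A) = mRk M A := by
  have : M.eRk (A ∪ {e}) = M.eRk A := eRk_eq_eRk_union_eRk_le_zero A he.eRk_eq.le
  rwa [union_singleton, ← cast_mRk, ← cast_mRk, Nat.cast_inj] at this

lemma IsColoop.mRk_insert (he : M.IsColoop e) (heA : e ∉ A) :
    mRk M (insert e A) = mRk M A + 1 := by
  have hcl : e ∈ M.E \ M.closure A :=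
    ⟨he.mem_ground, fun h ↦ heA ((isColoop_iff_forall_mem_closure_iff_mem.1 he A).1 h)⟩
  have := eRk_insert_eq_add_one hcl
  rwa [← cast_mRk, ← cast_mRk, ← Nat.cast_one, ← Nat.cast_add, Nat.cast_inj] at this

lemma mRk_ground_sdiff_singleton (he : ¬ M.IsColoop e) : mRk M (M.E \ {e}) = mRank M := by
  have : M.eRk (M.E \ {e}) = M.eRk M.E :=
    (not_not.1 (mt isColoop_iff_sdiff_not_spanning.2 he)).eRk_eq.trans M.eRk_ground.symm
  rwa [← cast_mRk, ← cast_mRk, Nat.cast_inj] at this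

lemma IsNonloop.mRk_contract_add_one (he : M.IsNonloop e) (heA : e ∉ A) :
    mRk (M ／ {e}) A + 1 = mRk M (insert e A) := by
  obtain ⟨J, hJ, heJ⟩ :=
    he.indep.subset_isBasis'_of_subset (Set.singleton_subset_iff.2 (mem_insert e A))
  have hJ' : (M ／ {e}).IsBasis' (J \ {e}) A := by
    refine IsBasis'.contract_isBasis_union_union ?_ disjoint_sdiff_left
      (disjoint_singleton_right.2 heA)
    rwa [sdiff_union_of_subset heJ, union_singleton]
  rw [hJ'.mRk_eq_ncard, hJ.mRk_eq_ncard,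
    ncard_sdiff_singleton_add_one (heJ rfl) hJ.indep.finite]

lemma IsColoop.mRank_delete_add_one (he : M.IsColoop e) : mRank (M ＼ {e}) + 1 = mRank M := by
  rw [mRank, delete_ground, mRk_delete subset_rfl, ← he.mRk_insert (fun h ↦ h.2 rfl),
    insert_sdiff_singleton, insert_eq_of_mem he.mem_ground, mRank]

lemma mRank_delete_of_not_isColoop (he : ¬ M.IsColoop e) : mRank (M ＼ {e}) = mRank M := by
  rw [mRank, delete_ground, mRk_delete subset_rfl, mRk_ground_sdiff_singleton he]

lemma IsNonloop.mRank_contract_add_one (he : M.IsNonloop e) : mRank (M ／ {e}) + 1 = mRank M := by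
  rw [mRank, contract_ground, he.mRk_contract_add_one (fun h ↦ h.2 rfl), insert_sdiff_singleton,
    insert_eq_of_mem he.mem_ground, mRank]

end Rank

lemma IsLoop.contract_eq_delete (he : M.IsLoop e) : M ／ {e} = M ＼ {e} :=
  contract_eq_delete_of_subset_loops (Set.singleton_subset_iff.2 he)

lemma IsColoop.contract_eq_delete (he : M.IsColoop e) : M ／ {e} = M ＼ {e} :=
  contract_eq_delete_of_subset_coloops (Set.singleton_subset_iff.2 he)

lemma mNullity_add_mRank [M.Finite] : mNullity M + mRank M = M.E.ncard :=
  Nat.sub_add_cancel (mRk_le_ncard M.ground_finite)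

lemma mNullity_add_mRank_add_one_of_ground_eq {N : Matroid α} [M.Finite] [N.Finite]
    (he : e ∈ M.E) (hN : N.E = M.E \ {e}) :
    mNullity N + mRank N + 1 = mNullity M + mRank M := by
  rw [mNullity_add_mRank, mNullity_add_mRank, hN, ncard_sdiff_singleton_add_one he M.ground_finite]

section Tutte

variable {R : Type*} [CommRing R]

noncomputable def tutteSummand (M : Matroid α) (x y : R) (A : Finset α) : R :=
  (x - 1) ^ (mRank M - mRk M A) * (y - 1) ^ (A.card - mRk M A)

lemma mTutte_eq_sum (s : Finset α) (hs : (s : Set α) = M.E) (x y : R) :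
    mTutte M x y = ∑ A ∈ s.powerset, tutteSummand M x y A := by
  have hE : M.E.Finite := hs ▸ s.finite_toSet
  rw [mTutte, dif_pos hE, show hE.toFinset = s by ext; simp [← hs]]
  rfl

lemma mTutte_eq_of_tutteSummand [DecidableEq α] [M.Finite] (he : e ∈ M.E) {x y c d : R}
    (hdel : ∀ A : Finset α, ↑A ⊆ M.E \ {e} →
      tutteSummand M x y A = c * tutteSummand (M ＼ {e}) x y A)
    (hcon : ∀ A : Finset α, ↑A ⊆ M.E \ {e} →
      tutteSummand M x y (insert e A) = d * tutteSummand (M ／ {e}) x y A) :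
    mTutte M x y = c * mTutte (M ＼ {e}) x y + d * mTutte (M ／ {e}) x y := by
  set s := M.ground_finite.sdiff (t := {e}) |>.toFinset
  have hs : (s : Set α) = M.E \ {e} := by simp [s]
  have hes : e ∉ s := by simp [s]
  rw [mTutte_eq_sum (insert e s) (by rw [coe_insert, hs, insert_sdiff_singleton,
      insert_eq_of_mem he]), mTutte_eq_sum s hs, mTutte_eq_sum s hs, sum_powerset_insert hes,
    mul_sum, mul_sum]
  have hsub : ∀ A ∈ s.powerset, (A : Set α) ⊆ M.E \ {e} := fun A hA ↦
    hs ▸ coe_subset.2 (mem_powerset.1 hA)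
  exact congr_arg₂ (· + ·) (sum_congr rfl fun A hA ↦ hdel A (hsub A hA))
    (sum_congr rfl fun A hA ↦ hcon A (hsub A hA))

section Summand

variable [M.RankFinite] {A : Finset α} (x y : R)

lemma tutteSummand_delete_of_not_isColoop (he : ¬ M.IsColoop e) (hA : ↑A ⊆ M.E \ {e}) :
    tutteSummand M x y A = tutteSummand (M ＼ {e}) x y A := by
  rw [tutteSummand, tutteSummand, mRank_delete_of_not_isColoop he, mRk_delete hA]

lemma IsColoop.tutteSummand_eq (he : M.IsColoop e) (hA : ↑A ⊆ M.E \ {e}) :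
    tutteSummand M x y A = (x - 1) * tutteSummand (M ＼ {e}) x y A := by
  have hle : mRk M A ≤ mRank (M ＼ {e}) := mRk_delete hA ▸ mRk_mono hA
  rw [tutteSummand, tutteSummand, mRk_delete hA, ← he.mRank_delete_add_one,
    Nat.sub_add_comm hle, pow_succ]
  ring

lemma IsNonloop.tutteSummand_insert [DecidableEq α] (he : M.IsNonloop e) (hA : ↑A ⊆ M.E \ {e}) :
    tutteSummand M x y (insert e A) = tutteSummand (M ／ {e}) x y A := by
  have heA : e ∉ A := fun h ↦ (hA h).2 rfl
  rw [tutteSummand, tutteSummand, coe_insert, card_insert_of_notMem heA,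
    ← he.mRk_contract_add_one (mt mem_coe.1 heA), ← he.mRank_contract_add_one,
    Nat.add_sub_add_right, Nat.add_sub_add_right]

lemma IsLoop.tutteSummand_insert [DecidableEq α] (he : M.IsLoop e) (hA : ↑A ⊆ M.E \ {e}) :
    tutteSummand M x y (insert e A) = (y - 1) * tutteSummand (M ／ {e}) x y A := by
  have heA : e ∉ A := fun h ↦ (hA h).2 rfl
  have hle : mRk M A ≤ A.card := by simpa using mRk_le_ncard (M := M) A.finite_toSet
  rw [he.contract_eq_delete, tutteSummand, tutteSummand, coe_insert, card_insert_of_notMem heA,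
    he.mRk_insert, mRank_delete_of_not_isColoop he.not_isColoop, mRk_delete hA,
    Nat.sub_add_comm hle, pow_succ]
  ring

end Summand

lemma mTutte_emptyOn (x y : R) : mTutte (emptyOn α) x y = 1 := by
  simp [mTutte_eq_sum (M := emptyOn α) ∅ (by simp), tutteSummand, mRank]

variable [M.Finite] (x y : R)

lemma IsColoop.mTutte_eq (he : M.IsColoop e) : mTutte M x y = x * mTutte (M ＼ {e}) x y := by
  classical
  rw [mTutte_eq_of_tutteSummand he.mem_ground (fun _ ↦ he.tutteSummand_eq x y)
    (fun _ hA ↦ (he.isNonloop.tutteSummand_insert x y hA).trans (one_mul _).symm),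
    he.contract_eq_delete]
  ring

lemma IsLoop.mTutte_eq (he : M.IsLoop e) : mTutte M x y = y * mTutte (M ／ {e}) x y := by
  classical
  rw [mTutte_eq_of_tutteSummand he.mem_ground
    (fun _ hA ↦ (tutteSummand_delete_of_not_isColoop x y he.not_isColoop hA).trans
      (one_mul _).symm)
    (fun _ ↦ he.tutteSummand_insert x y), ← he.contract_eq_delete]
  ring

lemma IsNonloop.mTutte_eq_add (he : M.IsNonloop e) (he' : ¬ M.IsColoop e) :
    mTutte M x y = mTutte (M ＼ {e}) x y + mTutte (M ／ {e}) x y := by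
  classical
  simpa using mTutte_eq_of_tutteSummand (x := x) (y := y) (c := 1) (d := 1) he.mem_ground
    (fun _ hA ↦ by rw [one_mul, tutteSummand_delete_of_not_isColoop x y he' hA])
    (fun _ hA ↦ by rw [one_mul, he.tutteSummand_insert x y hA])

end Tutte

/-- Only finite matroids are constrained: on infinite ones `mTutte` takes the junk value `0`. -/
structure SatisfiesRecipe {K : Type*} [Semiring K] (x y a b : K) (Q : Matroid α → K) : Prop where
  map_emptyOn : Q (emptyOn α) = 1
  coloop : ∀ (M : Matroid α) [M.Finite] (e : α), M.IsColoop e → Q M = x * Q (M ＼ {e})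
  loop : ∀ (M : Matroid α) [M.Finite] (e : α), M.IsLoop e → Q M = y * Q (M ／ {e})
  nonloop_not_coloop : ∀ (M : Matroid α) [M.Finite] (e : α), M.IsNonloop e → ¬ M.IsColoop e →
    Q M = a * Q (M ＼ {e}) + b * Q (M ／ {e})

lemma SatisfiesRecipe.eq {K : Type*} [Semiring K] {x y a b : K} {Q Q' : Matroid α → K}
    (hQ : SatisfiesRecipe x y a b Q) (hQ' : SatisfiesRecipe x y a b Q') (M : Matroid α)
    [M.Finite] : Q M = Q' M := by
  induction hn : M.E.ncard using Nat.strong_induction_on generalizing M with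
  | _ n ih =>
  obtain hE | ⟨e, he⟩ := M.E.eq_empty_or_nonempty
  · rw [ground_eq_empty_iff.1 hE, hQ.map_emptyOn, hQ'.map_emptyOn]
  have hlt : (M.E \ {e}).ncard < n := hn ▸ ncard_sdiff_singleton_lt_of_mem he M.ground_finite
  have hdel : Q (M ＼ {e}) = Q' (M ＼ {e}) := ih _ hlt _ rfl
  have hcon : Q (M ／ {e}) = Q' (M ／ {e}) := ih _ hlt _ rfl
  by_cases hcol : M.IsColoop e
  · rw [hQ.coloop M e hcol, hQ'.coloop M e hcol, hdel]
  by_cases hl : M.IsLoop e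
  · rw [hQ.loop M e hl, hQ'.loop M e hl, hcon]
  have hnl : M.IsNonloop e := (not_isLoop_iff he).1 hl
  rw [hQ.nonloop_not_coloop M e hnl hcol, hQ'.nonloop_not_coloop M e hnl hcol, hdel, hcon]

lemma satisfiesRecipe_mTutte {K : Type*} [Field K] {x y a b : K} (ha : a ≠ 0) (hb : b ≠ 0) :
    SatisfiesRecipe x y a b
      (fun M : Matroid α ↦ a ^ mNullity M * b ^ mRank M * mTutte M (x / b) (y / a)) where
  map_emptyOn := by
    have h := mNullity_add_mRank (M := emptyOn α)
    rw [emptyOn_ground, ncard_empty] at h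
    simp [mTutte_emptyOn, show mNullity (emptyOn α) = 0 by omega,
      show mRank (emptyOn α) = 0 by omega]
  coloop M _ e he := by
    have hr := he.mRank_delete_add_one
    have hn := mNullity_add_mRank_add_one_of_ground_eq (N := M ＼ {e}) he.mem_ground rfl
    rw [he.mTutte_eq, show mNullity M = mNullity (M ＼ {e}) by omega, ← hr, pow_succ]
    field_simp
  loop M _ e he := by
    have hr : mRank (M ／ {e}) = mRank M := by
      rw [he.contract_eq_delete, mRank_delete_of_not_isColoop he.not_isColoop]
    have hn := mNullity_add_mRank_add_one_of_ground_eq (N := M ／ {e}) he.mem_ground rfl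
    rw [he.mTutte_eq, show mNullity M = mNullity (M ／ {e}) + 1 by omega, hr, pow_succ]
    field_simp
  nonloop_not_coloop M _ e he hcol := by
    have hr₁ := mRank_delete_of_not_isColoop hcol
    have hr₂ := he.mRank_contract_add_one
    have hn₁ := mNullity_add_mRank_add_one_of_ground_eq (N := M ＼ {e}) he.mem_ground rfl
    have hn₂ := mNullity_add_mRank_add_one_of_ground_eq (N := M ／ {e}) he.mem_ground rfl
    rw [he.mTutte_eq_add _ _ hcol, show mNullity M = mNullity (M ＼ {e}) + 1 by omega,
      show mNullity (M ／ {e}) = mNullity (M ＼ {e}) + 1 by omega, hr₁, ← hr₂, pow_succ, pow_succ]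
    ring

end Matroid

theorem recipe_general {K : Type*} [Field K] (x y a b : K) (ha : a ≠ 0) (hb : b ≠ 0)
    (Q : Matroid α → K)
    (hone : Q (Matroid.emptyOn α) = 1)
    (hcoloop : ∀ (M : Matroid α) (e : α), e ∈ M.E → mIsColoop M e →
      Q M = x * Q (mDelete M {e}))
    (hloop : ∀ (M : Matroid α) (e : α), mIsLoop M e →
      Q M = y * Q (mContract M {e}))
    (hreg : ∀ (M : Matroid α) (e : α), e ∈ M.E → ¬ mIsLoop M e → ¬ mIsColoop M e →
      Q M = a * Q (mDelete M {e}) + b * Q (mContract M {e}))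
    (M : Matroid α) (hE : M.E.Finite) :
    Q M = a ^ mNullity M * b ^ mRank M * mTutte M (x / b) (y / a) := by
  have : M.Finite := ⟨hE⟩
  refine SatisfiesRecipe.eq ⟨hone, ?_, ?_, ?_⟩ (satisfiesRecipe_mTutte ha hb) M
  · exact fun M _ e he ↦ hcoloop M e he.mem_ground (mIsColoop_iff.2 he)
  · exact fun M _ e he ↦ hloop M e (mIsLoop_iff.2 he)
  · exact fun M _ e he hcol ↦ hreg M e he.mem_ground (mt mIsLoop_iff.1 he.not_isLoop)
      (mt mIsColoop_iff.1 hcol)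

/-- the recipe theorem. Any matroid invariant `Q` that is multiplicative over
direct sums (with value `1` on the empty matroid) and satisfies the given coloop, loop and
deletion/contraction rules is an evaluation of the Tutte polynomial:
`Q_M = a^{n(M)} b^{r(M)} T_M(x/b, y/a)`. -/
theorem recipe {K : Type*} [Field K] (x y a b : K) (ha : a ≠ 0) (hb : b ≠ 0)
    (Q : Matroid α → K)
    (hmul : ∀ (M N : Matroid α) (h : Disjoint M.E N.E),
      Q (M.disjointSum N h) = Q M * Q N)
    (hone : Q (Matroid.emptyOn α) = 1)
    (hcoloop : ∀ (M : Matroid α) (e : α), e ∈ M.E → mIsColoop M e →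
      Q M = x * Q (mDelete M {e}))
    (hloop : ∀ (M : Matroid α) (e : α), mIsLoop M e →
      Q M = y * Q (mContract M {e}))
    (hreg : ∀ (M : Matroid α) (e : α), e ∈ M.E → ¬ mIsLoop M e → ¬ mIsColoop M e →
      Q M = a * Q (mDelete M {e}) + b * Q (mContract M {e}))
    (M : Matroid α) (hE : M.E.Finite) :
    Q M = a ^ mNullity M * b ^ mRank M * mTutte M (x / b) (y / a) :=
  recipe_general x y a b ha hb Q hone hcoloop hloop hreg M hE
end

section
/- The coproduct Δ(M) = Σ_{A ⊆ E} M|_A ⊗ M/A on the vector space spanned by isomorphism classes of matroids is coassociative. -/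
open Matroid Set Finset

variable {α : Type*}

/-- Isomorphism of matroids (on the same type): `N` is the image of `M` under an
injective-on-ground-set map. Taking `Quot` of this relation gives isomorphism classes. -/
def MatIso {β : Type*} (M N : Matroid β) : Prop :=
  ∃ (f : β → β) (hf : Set.InjOn f M.E), M.map f hf = N

/-!
Coassociativity is a reindexing: the chains `B ⊆ A ⊆ E` correspond to the disjoint pairs
`(B, A \ B)`, and under this correspondence the terms agree because `(M|A)|B = M|B`,
`(M|A)/B = (M/B)|(A \ B)` and `(M/B)/(A \ B) = M/A`.
-/

theorem Finset.sum_powerset_sum_powerset_eq_sum_powerset_sum_powerset_sdiff {β : Type*}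
    [DecidableEq α] [AddCommMonoid β] (s : Finset α) (f : Finset α → Finset α → β) :
    ∑ A ∈ s.powerset, ∑ B ∈ A.powerset, f A B =
      ∑ A ∈ s.powerset, ∑ B ∈ (s \ A).powerset, f (A ∪ B) A := by
  rw [sum_comm' (t' := s.powerset) (s' := (Icc · s)) fun A B => by
    simp only [mem_powerset, mem_Icc]; grind]
  refine sum_congr rfl fun A hA => ?_
  rw [Icc_eq_image_powerset (mem_powerset.mp hA), sum_image]
  intro B hB C hC hBC
  simp only [coe_powerset, Set.mem_preimage, Set.mem_powerset_iff, coe_subset, subset_sdiff]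
    at hB hC hBC
  rw [← union_sdiff_cancel_left hB.2.symm, hBC, union_sdiff_cancel_left hC.2.symm]

theorem mContract_eq_contract (M : Matroid α) (C : Set α) : mContract M C = M ／ C := rfl

open Classical in
/-- coassociativity of the coproduct `Δ(M) = Σ_{A ⊆ E} M|_A ⊗ M/A` on the
vector space spanned by isomorphism classes of matroids, stated on basis elements:
`(Δ ⊗ id)(Δ(M)) = (id ⊗ Δ)(Δ(M))` in the free module on triples of isomorphism classes. -/
theorem coassoc (M : Matroid α) (hE : M.E.Finite) :
    (∑ A ∈ hE.toFinset.powerset, ∑ B ∈ A.powerset,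
      Finsupp.single
        (Quot.mk MatIso ((M ↾ (A : Set α)) ↾ (B : Set α)),
         Quot.mk MatIso (mContract (M ↾ (A : Set α)) (B : Set α)),
         Quot.mk MatIso (mContract M (A : Set α))) (1 : ℚ)) =
    ∑ A ∈ hE.toFinset.powerset, ∑ B ∈ (hE.toFinset \ A).powerset,
      Finsupp.single
        (Quot.mk MatIso (M ↾ (A : Set α)),
         Quot.mk MatIso ((mContract M (A : Set α)) ↾ (B : Set α)),
         Quot.mk MatIso (mContract (mContract M (A : Set α)) (B : Set α))) (1 : ℚ) := by
  rw [sum_powerset_sum_powerset_eq_sum_powerset_sum_powerset_sdiff]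
  refine sum_congr rfl fun A _ => sum_congr rfl fun B hB => ?_
  have hAB : Disjoint (A : Set α) B :=
    Finset.disjoint_coe.mpr (Finset.subset_sdiff.mp (mem_powerset.mp hB)).2.symm
  simp only [mContract_eq_contract]
  rw [coe_union, restrict_restrict_eq M Set.subset_union_left,
    contract_restrict_eq_restrict_contract M hAB, Set.union_comm (B : Set α), contract_contract]
end
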